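/- Let a : [0,1) → P_n be a path that is piecewise C¹ on every subinterval [0,s] with s < 1, and suppose its total length is finite, i.e. sup_{s<1} L(a|_{[0,s]}) < ∞. If det(g⁻¹a(t)) does not converge to 0 as t → 1, then a(t) converges entrywise as t → 1 to a limit belonging to P_n. -/

import Mathlib

/-!
Write `N = ‖γ'‖_γ` for the length element. With `c = γ^{-1/2}`, the matrix `c γ' c` is symmetric and
`trSq γ γ'` is its squared Frobenius norm, so Cauchy–Schwarz gives `|(qdet g γ)'| ≤ (√n / 4) N` and
`|(log (w ⬝ γ w))'| ≤ N / qdet g γ`. Finite total length therefore makes `qdet g γ` Cauchy as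
`t → 1⁻`; its limit is positive because `det (g⁻¹ γ)` does not tend to `0`. Then `qdet g γ` is
bounded below near `1`, so every `log (w ⬝ γ w)` is Cauchy as well: each quadratic form of `γ` has
a positive limit, and polarization turns these into a positive-definite limit of `γ`.
-/

open Matrix Real MeasureTheory Filter

noncomputable section

/-- The set of real symmetric positive-definite `n × n` matrices. -/
def Pn (n : ℕ) : Set (Matrix (Fin n) (Fin n) ℝ) := {a | a.PosDef}

/-- `tr_a(b) = tr(a⁻¹ b)`. -/
def trA {n : ℕ} (a b : Matrix (Fin n) (Fin n) ℝ) : ℝ := (a⁻¹ * b).trace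

/-- `tr_a(b²) = tr((a⁻¹ b)²)`. -/
def trSq {n : ℕ} (a b : Matrix (Fin n) (Fin n) ℝ) : ℝ := ((a⁻¹ * b) * (a⁻¹ * b)).trace

/-- The `a`-traceless part `b_T = b - (1/n) tr_a(b) a`. -/
def tracelessPart {n : ℕ} (a b : Matrix (Fin n) (Fin n) ℝ) : Matrix (Fin n) (Fin n) ℝ :=
  b - ((trA a b) / (n : ℝ)) • a

/-- `(det (g⁻¹ a))^{1/4}`. -/
def qdet {n : ℕ} (g a : Matrix (Fin n) (Fin n) ℝ) : ℝ := ((g⁻¹ * a).det) ^ ((1 : ℝ) / 4)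

/-- The norm `‖b‖_a = (tr((a⁻¹b)²))^{1/2} (det (g⁻¹ a))^{1/4}`. -/
def fiberNorm {n : ℕ} (g a b : Matrix (Fin n) (Fin n) ℝ) : ℝ :=
  Real.sqrt (trSq a b) * qdet g a

/-- Entrywise derivative of a path of matrices. -/
def pathDeriv {n : ℕ} (γ : ℝ → Matrix (Fin n) (Fin n) ℝ) (t : ℝ) : Matrix (Fin n) (Fin n) ℝ :=
  Matrix.of fun i j => deriv (fun s => γ s i j) t

/-- A path of matrices is `C¹` on a set if it is entrywise `C¹` there. -/
def C1On {n : ℕ} (γ : ℝ → Matrix (Fin n) (Fin n) ℝ) (s : Set ℝ) : Prop :=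
  ∀ i j, ContDiffOn ℝ 1 (fun t => γ t i j) s

/-- `γ` is piecewise `C¹` on `[t₀, t₁]`. -/
def PiecewiseC1On {n : ℕ} (γ : ℝ → Matrix (Fin n) (Fin n) ℝ) (t₀ t₁ : ℝ) : Prop :=
  ContinuousOn γ (Set.Icc t₀ t₁) ∧
  ∃ (k : ℕ) (s : Fin (k + 1) → ℝ), StrictMono s ∧ s 0 = t₀ ∧ s (Fin.last k) = t₁ ∧
    ∀ i : Fin k, C1On γ (Set.Icc (s i.castSucc) (s i.succ))

/-- Length of a path with respect to the fiber metric determined by `g`. -/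
def pathLength {n : ℕ} (g : Matrix (Fin n) (Fin n) ℝ) (γ : ℝ → Matrix (Fin n) (Fin n) ℝ)
    (t₀ t₁ : ℝ) : ℝ :=
  ∫ t in t₀..t₁, fiberNorm g (γ t) (pathDeriv γ t)

/-- The Riemannian distance: the infimum of lengths of piecewise `C¹` paths in `P_n`. -/
def ebinDist {n : ℕ} (g a₀ a₁ : Matrix (Fin n) (Fin n) ℝ) : ℝ :=
  sInf {L : ℝ | ∃ γ : ℝ → Matrix (Fin n) (Fin n) ℝ,
    PiecewiseC1On γ 0 1 ∧ (∀ t ∈ Set.Icc (0 : ℝ) 1, γ t ∈ Pn n) ∧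
    γ 0 = a₀ ∧ γ 1 = a₁ ∧ L = pathLength g γ 0 1}

/-- `a·exp(a⁻¹ b)`, using the matrix exponential. -/
def expAt {n : ℕ} (a b : Matrix (Fin n) (Fin n) ℝ) : Matrix (Fin n) (Fin n) ℝ :=
  a * NormedSpace.exp (a⁻¹ * b)

/-- The explicit geodesic with initial point `a₀` and initial tangent `h`. -/
def geodesicPath {n : ℕ} (a₀ h : Matrix (Fin n) (Fin n) ℝ) (t : ℝ) : Matrix (Fin n) (Fin n) ℝ :=
  let hT := tracelessPart a₀ h
  let q : ℝ := 1 + t / 4 * trA a₀ h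
  let r : ℝ := t / 4 * Real.sqrt ((n : ℝ) * trSq a₀ hT)
  if hT = 0 then (q ^ ((4 : ℝ) / n)) • a₀
  else ((q ^ 2 + r ^ 2) ^ ((2 : ℝ) / n)) •
    (a₀ * NormedSpace.exp
      ((4 * Complex.arg ⟨q, r⟩ / Real.sqrt ((n : ℝ) * trSq a₀ hT)) • (a₀⁻¹ * hT)))

/-- The inverse `ψ` of the Riemannian exponential mapping based at `a₀`. -/
def psiMap {n : ℕ} (a₀ b : Matrix (Fin n) (Fin n) ℝ) : Matrix (Fin n) (Fin n) ℝ :=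
  let bT := tracelessPart a₀ b
  let ω : ℝ := Real.sqrt ((n : ℝ) * trSq a₀ bT) / 4
  if bT = 0 then ((4 / (n : ℝ)) * (Real.exp (trA a₀ b / 4) - 1)) • a₀
  else ((4 / (n : ℝ)) * (Real.exp (trA a₀ b / 4) * Real.cos ω - 1)) • a₀ +
    ((4 / Real.sqrt ((n : ℝ) * trSq a₀ bT)) * Real.exp (trA a₀ b / 4) * Real.sin ω) • bT

open Set Topology

namespace Matrix

lemma PosDef.transpose_eq {ι : Type*} {a : Matrix ι ι ℝ} (ha : a.PosDef) : aᵀ = a :=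
  (isHermitian_iff_isSymm.1 ha.isHermitian).eq

variable {ι : Type*} [Fintype ι]

lemma trace_mul_transpose_self (S : Matrix ι ι ℝ) : (S * Sᵀ).trace = ∑ i, ∑ j, S i j ^ 2 := by
  simp only [trace, diag, mul_apply, transpose_apply, sq]

lemma abs_trace_le (S : Matrix ι ι ℝ) :
    |S.trace| ≤ √(Fintype.card ι) * √(∑ i, ∑ j, S i j ^ 2) := by
  have hcs := Finset.sum_mul_sq_le_sq_mul_sq Finset.univ (fun i => S i i) fun _ => (1 : ℝ)
  simp only [mul_one, one_pow, Finset.sum_const, Finset.card_univ, nsmul_eq_mul] at hcs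
  have hdiag : ∑ i, S i i ^ 2 ≤ ∑ i, ∑ j, S i j ^ 2 := Finset.sum_le_sum fun i _ =>
    Finset.single_le_sum (fun j _ => sq_nonneg (S i j)) (Finset.mem_univ i)
  rw [← Real.sqrt_mul (Nat.cast_nonneg _)]
  refine Real.abs_le_sqrt (hcs.trans ?_)
  rw [mul_comm]
  gcongr

lemma abs_dotProduct_mulVec_le (S : Matrix ι ι ℝ) (w : ι → ℝ) :
    |w ⬝ᵥ S *ᵥ w| ≤ √(∑ i, ∑ j, S i j ^ 2) * (w ⬝ᵥ w) := by
  have hww : w ⬝ᵥ w = √((∑ i, w i ^ 2) ^ 2) := by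
    rw [Real.sqrt_sq (by positivity)]
    simp [dotProduct, sq]
  rw [hww, ← Real.sqrt_mul (by positivity)]
  refine Real.abs_le_sqrt ?_
  calc (w ⬝ᵥ S *ᵥ w) ^ 2 = (∑ p : ι × ι, S p.1 p.2 * (w p.1 * w p.2)) ^ 2 := by
        simp only [dotProduct, mulVec, Fintype.sum_prod_type, Finset.mul_sum]
        congr 1
        exact Finset.sum_congr rfl fun i _ => Finset.sum_congr rfl fun j _ => by ring
    _ ≤ (∑ p : ι × ι, S p.1 p.2 ^ 2) * ∑ p : ι × ι, (w p.1 * w p.2) ^ 2 :=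
        Finset.sum_mul_sq_le_sq_mul_sq _ _ _
    _ = (∑ i, ∑ j, S i j ^ 2) * (∑ i, w i ^ 2) ^ 2 := by
        simp only [Fintype.sum_prod_type, mul_pow, sq (∑ i, w i ^ 2), Finset.sum_mul_sum]

lemma PosDef.exists_transpose_eq_mul_self_eq_inv [DecidableEq ι] {a : Matrix ι ι ℝ}
    (ha : a.PosDef) : ∃ c : Matrix ι ι ℝ, cᵀ = c ∧ c * c = a⁻¹ := by
  open scoped MatrixOrder in
  obtain ⟨c, hc, -, hcc⟩ := CFC.exists_sqrt_of_isSelfAdjoint_of_quasispectrumRestricts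
    ha.inv.isHermitian (QuasispectrumRestricts.nnreal_of_nonneg ha.inv.posSemidef.nonneg)
  exact ⟨c, (conjTranspose_eq_transpose_of_trivial c).symm.trans hc, hcc⟩

lemma mulVec_dotProduct_mulVec_mulVec (c X : Matrix ι ι ℝ) (w : ι → ℝ) :
    (c *ᵥ w) ⬝ᵥ X *ᵥ (c *ᵥ w) = w ⬝ᵥ (cᵀ * X * c) *ᵥ w := by
  rw [mulVec_mulVec, dotProduct_mulVec, ← vecMul_transpose, vecMul_vecMul, dotProduct_mulVec,
    Matrix.mul_assoc]

lemma continuous_dotProduct_mulVec (w : ι → ℝ) :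
    Continuous fun A : Matrix ι ι ℝ => w ⬝ᵥ A *ᵥ w :=
  continuous_const.dotProduct (continuous_id.matrix_mulVec continuous_const)

lemma single_add_single_dotProduct_mulVec [DecidableEq ι] {B : Matrix ι ι ℝ} (hB : Bᵀ = B)
    (i j : ι) :
    (Pi.single i 1 + Pi.single j 1) ⬝ᵥ B *ᵥ (Pi.single i 1 + Pi.single j 1) =
      Pi.single i 1 ⬝ᵥ B *ᵥ Pi.single i 1 + 2 * B i j + Pi.single j 1 ⬝ᵥ B *ᵥ Pi.single j 1 := by
  have hji : B j i = B i j := congrFun (congrFun hB i) j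
  simp only [mulVec_add, dotProduct_add, add_dotProduct, mulVec_single_one, single_dotProduct,
    one_mul, col_apply, hji]
  ring

lemma exists_posDef_tendsto_of_tendsto_dotProduct_mulVec [DecidableEq ι] {α : Type*}
    {l : Filter α} [l.NeBot] {M : α → Matrix ι ι ℝ} (hsymm : ∀ᶠ x in l, (M x)ᵀ = M x)
    (hM : ∀ w : ι → ℝ, w ≠ 0 → ∃ c > 0, Tendsto (fun x => w ⬝ᵥ M x *ᵥ w) l (𝓝 c)) :
    ∃ A : Matrix ι ι ℝ, A.PosDef ∧ Tendsto M l (𝓝 A) := by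
  have hq : ∀ w : ι → ℝ, ∃ c, Tendsto (fun x => w ⬝ᵥ M x *ᵥ w) l (𝓝 c) := fun w => by
    obtain rfl | hw := eq_or_ne w 0
    · exact ⟨0, by simp⟩
    · obtain ⟨c, -, hc⟩ := hM w hw
      exact ⟨c, hc⟩
  choose U hU using hq
  set e : ι → ι → ℝ := fun i => Pi.single i 1
  set A : Matrix ι ι ℝ := of fun i j => (U (e i + e j) - U (e i) - U (e j)) / 2
  have hA : Tendsto M l (𝓝 A) := tendsto_pi_nhds.2 fun i => tendsto_pi_nhds.2 fun j => by
    refine ((((hU (e i + e j)).sub (hU (e i))).sub (hU (e j))).div_const 2).congr' ?_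
    filter_upwards [hsymm] with x hx
    rw [single_add_single_dotProduct_mulVec hx]
    ring
  have hAq : ∀ w, w ⬝ᵥ A *ᵥ w = U w := fun w =>
    tendsto_nhds_unique (((continuous_dotProduct_mulVec w).tendsto A).comp hA) (hU w)
  refine ⟨A, .of_dotProduct_mulVec_pos ?_ fun w hw => ?_, hA⟩
  · refine Matrix.ext fun i j => ?_
    simp only [conjTranspose_apply, star_trivial, A, of_apply, add_comm (e j) (e i)]
    ring
  · obtain ⟨c, hc, hwc⟩ := hM w hw
    rw [star_trivial, hAq, tendsto_nhds_unique (hU w) hwc]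
    exact hc

end Matrix

section TraceInequalities

variable {n : ℕ} {a b c : Matrix (Fin n) (Fin n) ℝ}

lemma trSq_eq_sum_sq (hc : cᵀ = c) (hcc : c * c = a⁻¹) (hb : bᵀ = b) :
    trSq a b = ∑ i, ∑ j, (c * b * c) i j ^ 2 := by
  have hS : (c * b * c)ᵀ = c * b * c := by
    rw [transpose_mul, transpose_mul, hc, hb, Matrix.mul_assoc]
  calc trSq a b = (c * (c * b * c * c * b)).trace := by
        rw [trSq, ← hcc]; simp only [Matrix.mul_assoc]
    _ = (c * b * c * (c * b * c)ᵀ).trace := by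
        rw [trace_mul_comm, hS]; simp only [Matrix.mul_assoc]
    _ = ∑ i, ∑ j, (c * b * c) i j ^ 2 := trace_mul_transpose_self _

lemma trA_eq_trace (hcc : c * c = a⁻¹) : trA a b = (c * b * c).trace := by
  rw [trA, ← hcc, Matrix.mul_assoc, trace_mul_comm, Matrix.mul_assoc]

lemma abs_trA_le (ha : a.PosDef) (hb : bᵀ = b) : |trA a b| ≤ √n * √(trSq a b) := by
  obtain ⟨c, hc, hcc⟩ := ha.exists_transpose_eq_mul_self_eq_inv
  simpa [trA_eq_trace hcc, trSq_eq_sum_sq hc hcc hb] using abs_trace_le (c * b * c)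

lemma abs_dotProduct_mulVec_le_sqrt_trSq (ha : a.PosDef) (hb : bᵀ = b) (v : Fin n → ℝ) :
    |v ⬝ᵥ b *ᵥ v| ≤ √(trSq a b) * (v ⬝ᵥ a *ᵥ v) := by
  obtain ⟨c, hc, hcc⟩ := ha.exists_transpose_eq_mul_self_eq_inv
  have hca : c * (c * a) = 1 := by
    rw [← Matrix.mul_assoc, hcc, nonsing_inv_mul a (isUnit_iff_ne_zero.2 ha.det_pos.ne')]
  obtain ⟨w, rfl⟩ : ∃ w, c *ᵥ w = v := ⟨(c * a) *ᵥ v, by rw [mulVec_mulVec, hca, one_mulVec]⟩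
  rw [mulVec_dotProduct_mulVec_mulVec, mulVec_dotProduct_mulVec_mulVec, hc,
    mul_eq_one_comm.1 hca, one_mulVec, trSq_eq_sum_sq hc hcc hb]
  exact abs_dotProduct_mulVec_le _ w

end TraceInequalities

section Derivatives

variable {ι : Type*} [Fintype ι] {M : ℝ → Matrix ι ι ℝ} {B : Matrix ι ι ℝ} {t : ℝ}

lemma hasDerivAt_dotProduct_mulVec (w : ι → ℝ)
    (hM : ∀ i j, HasDerivAt (fun u => M u i j) (B i j) t) :
    HasDerivAt (fun u => w ⬝ᵥ M u *ᵥ w) (w ⬝ᵥ B *ᵥ w) t := by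
  simp only [dotProduct, mulVec, Finset.mul_sum]
  exact HasDerivAt.fun_sum fun i _ => HasDerivAt.fun_sum fun j _ =>
    ((hM i j).mul_const _).const_mul _

variable [DecidableEq ι]

lemma hasDerivAt_det_of_eq_one (hM : ∀ i j, HasDerivAt (fun u => M u i j) (B i j) t)
    (h1 : M t = 1) : HasDerivAt (fun u => (M u).det) B.trace t := by
  simp only [det_apply']
  refine (HasDerivAt.fun_sum fun σ _ =>
    (HasDerivAt.fun_finsetProd fun i _ => hM (σ i) i).const_mul _).congr_deriv ?_
  rw [Finset.sum_eq_single (1 : Equiv.Perm ι)]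
  · simp [h1, trace, Finset.prod_eq_one]
  · -- every term of the product rule for `σ ≠ 1` keeps an off-diagonal entry of `M t = 1`
    intro σ _ hσ
    obtain ⟨p, hp⟩ : ∃ p, σ p ≠ p := by
      by_contra! h
      exact hσ (Equiv.ext h)
    have hzero : ∀ i, ∏ j ∈ Finset.univ.erase i, M t (σ j) j = 0 := fun i => by
      obtain ⟨j, hji, hj⟩ : ∃ j, j ≠ i ∧ σ j ≠ j := by
        by_cases hpi : p = i
        · subst hpi
          exact ⟨σ p, hp, fun h => hp (σ.injective h)⟩
        · exact ⟨p, hpi, hp⟩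
      exact Finset.prod_eq_zero (Finset.mem_erase.2 ⟨hji, Finset.mem_univ _⟩)
        (by rw [h1, one_apply_ne hj])
    simp [hzero]
  · simp

lemma hasDerivAt_det (hdet : IsUnit (M t).det)
    (hM : ∀ i j, HasDerivAt (fun u => M u i j) (B i j) t) :
    HasDerivAt (fun u => (M u).det) ((M t).det * ((M t)⁻¹ * B).trace) t := by
  have hM' : ∀ i j, HasDerivAt (fun u => ((M t)⁻¹ * M u) i j) (((M t)⁻¹ * B) i j) t :=
    fun i j => by
      simp only [mul_apply]
      exact HasDerivAt.fun_sum fun k _ => (hM k j).const_mul _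
  refine ((hasDerivAt_det_of_eq_one hM' (nonsing_inv_mul _ hdet)).const_mul (M t).det)
    |>.congr_of_eventuallyEq (.of_forall fun u => ?_)
  show (M u).det = (M t).det * ((M t)⁻¹ * M u).det
  rw [det_mul, ← mul_assoc, det_nonsing_inv, Ring.mul_inverse_cancel _ hdet, one_mul]

end Derivatives

lemma qdet_pos {n : ℕ} {g a : Matrix (Fin n) (Fin n) ℝ} (hg : g.PosDef) (ha : a.PosDef) :
    0 < qdet g a :=
  Real.rpow_pos_of_pos (det_mul g⁻¹ a ▸ mul_pos hg.inv.det_pos ha.det_pos) _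

lemma continuous_qdet {n : ℕ} (g : Matrix (Fin n) (Fin n) ℝ) : Continuous (qdet g) :=
  (continuous_const.matrix_mul continuous_id).matrix_det.rpow_const fun _ => Or.inr (by norm_num)

lemma qdet_pow_four {n : ℕ} {g a : Matrix (Fin n) (Fin n) ℝ} (h : 0 ≤ (g⁻¹ * a).det) :
    qdet g a ^ 4 = (g⁻¹ * a).det := by
  rw [qdet, ← Real.rpow_mul_natCast h]
  norm_num

lemma hasDerivAt_qdet {n : ℕ} {g b : Matrix (Fin n) (Fin n) ℝ} {γ : ℝ → Matrix (Fin n) (Fin n) ℝ}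
    {t : ℝ} (hg : g.PosDef) (hγ : (γ t).PosDef)
    (hγ' : ∀ i j, HasDerivAt (fun u => γ u i j) (b i j) t) :
    HasDerivAt (fun u => qdet g (γ u)) (qdet g (γ t) * trA (γ t) b / 4) t := by
  have hD : 0 < g⁻¹.det * (γ t).det := mul_pos hg.inv.det_pos hγ.det_pos
  have hdet := ((hasDerivAt_det hγ.det_pos.ne'.isUnit hγ').const_mul g⁻¹.det).rpow_const
    (p := 1 / 4) (Or.inl hD.ne')
  simp only [qdet, det_mul]
  convert hdet using 1
  rw [Real.rpow_sub_one hD.ne', trA]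
  field_simp
  rw [mul_div_cancel_left₀ _ hD.ne']

lemma abs_sub_le_integral_of_abs_deriv_le {F F' N : ℝ → ℝ} {u v : ℝ} {S : Set ℝ} (huv : u ≤ v)
    (hS : S.Countable) (hF : ContinuousOn F (Icc u v))
    (hF' : ∀ t ∈ Ioo u v \ S, HasDerivAt F (F' t) t) (hbound : ∀ t ∈ Ioo u v \ S, |F' t| ≤ N t)
    (hN : IntervalIntegrable N volume u v) :
    |F v - F u| ≤ ∫ t in u..v, N t := by
  have hae : ∀ᵐ t, t ∈ Ioc u v → t ∈ Ioo u v \ S := by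
    filter_upwards [(hS.insert v).ae_notMem volume] with t ht htuv
    exact ⟨⟨htuv.1, htuv.2.lt_of_ne fun h => ht (.inl h)⟩, fun h => ht (.inr h)⟩
  have hderiv : ∀ t ∈ Ioo u v \ S, deriv F t = F' t := fun t ht => (hF' t ht).deriv
  have hbound' : ∀ᵐ t, t ∈ Ioc u v → ‖deriv F t‖ ≤ N t := hae.mono fun t h ht => by
    rw [hderiv t (h ht), Real.norm_eq_abs]
    exact hbound t (h ht)
  have hint : IntervalIntegrable (deriv F) volume u v := by
    refine hN.mono_fun' (measurable_deriv F).aestronglyMeasurable ?_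
    rw [EventuallyLE, uIoc_of_le huv, ae_restrict_iff' measurableSet_Ioc]
    exact hbound'
  rw [← integral_eq_of_hasDerivAt_off_countable_of_le F (deriv F) huv hS hF
    (fun t ht => hderiv t ht ▸ hF' t ht) hint, ← Real.norm_eq_abs]
  exact intervalIntegral.norm_integral_le_of_norm_le huv hbound' hN

lemma exists_tendsto_of_dist_le_mul_dist {α E X : Type*} [PseudoMetricSpace E] [CompleteSpace E]
    [PseudoMetricSpace X] {l : Filter α} [l.NeBot] {F : α → E} {G : α → X} {x : X} {K : ℝ}
    (hG : Tendsto G l (𝓝 x)) (h : ∀ᶠ p in l ×ˢ l, dist (F p.1) (F p.2) ≤ K * dist (G p.1) (G p.2)) :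
    ∃ y, Tendsto F l (𝓝 y) := by
  have hGc := tendsto_uniformity_iff_dist_tendsto_zero.1 (cauchy_map_iff'.1 hG.cauchy_map)
  have hFc : Cauchy (l.map F) := cauchy_map_iff'.2 <|
    tendsto_uniformity_iff_dist_tendsto_zero.2 <|
      squeeze_zero' (.of_forall fun _ => dist_nonneg) h (by simpa using hGc.const_mul K)
  exact CompleteSpace.complete hFc

lemma exists_mem_Ioo_of_notMem_range {α : Type*} [LinearOrder α] {k : ℕ} {s : Fin (k + 1) → α}
    {t : α} (ht : t ∈ Ioo (s 0) (s (Fin.last k))) (hts : t ∉ range s) :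
    ∃ i : Fin k, t ∈ Ioo (s i.castSucc) (s i.succ) := by
  suffices ∀ i : Fin (k + 1), t < s i → ∃ j : Fin k, t ∈ Ioo (s j.castSucc) (s j.succ) from
    this _ ht.2
  intro i
  induction i using Fin.induction with
  | zero => exact fun h => absurd ht.1 h.not_gt
  | succ i ih =>
    intro hi
    rcases lt_or_ge t (s i.castSucc) with h | h
    · exact ih h
    · exact ⟨i, h.lt_of_ne fun he => hts ⟨_, he⟩, hi⟩

section PiecewiseC1

variable {n : ℕ} {γ : ℝ → Matrix (Fin n) (Fin n) ℝ}

lemma C1On.hasDerivAt {p q t : ℝ} (h : C1On γ (Icc p q)) (ht : t ∈ Ioo p q) (i j : Fin n) :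
    HasDerivAt (fun x => γ x i j) (pathDeriv γ t i j) t :=
  (((h i j).differentiableOn one_ne_zero t (Ioo_subset_Icc_self ht)).differentiableAt
    (Icc_mem_nhds ht.1 ht.2)).hasDerivAt

lemma PiecewiseC1On.exists_finite_hasDerivAt {t₀ t₁ : ℝ} (h : PiecewiseC1On γ t₀ t₁) :
    ∃ S : Set ℝ, S.Finite ∧ ∀ t ∈ Ioo t₀ t₁ \ S, ∀ i j,
      HasDerivAt (fun x => γ x i j) (pathDeriv γ t i j) t := by
  obtain ⟨-, k, s, -, rfl, rfl, hC⟩ := h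
  refine ⟨range s, finite_range s, fun t ht => ?_⟩
  obtain ⟨i, hi⟩ := exists_mem_Ioo_of_notMem_range ht.1 ht.2
  exact (hC i).hasDerivAt hi

lemma continuousAt_fiberNorm (g : Matrix (Fin n) (Fin n) ℝ) {a : Matrix (Fin n) (Fin n) ℝ}
    (ha : IsUnit a.det) (b : Matrix (Fin n) (Fin n) ℝ) :
    ContinuousAt (fun p : Matrix (Fin n) (Fin n) ℝ × Matrix (Fin n) (Fin n) ℝ =>
      fiberNorm g p.1 p.2) (a, b) := by
  have hinv : ContinuousAt (fun p : Matrix (Fin n) (Fin n) ℝ × Matrix (Fin n) (Fin n) ℝ => p.1⁻¹)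
      (a, b) :=
    (continuousAt_matrix_inv a (NormedRing.inverse_continuousAt ha.unit)).comp continuousAt_fst
  unfold fiberNorm trSq qdet
  fun_prop (disch := norm_num)

lemma C1On.intervalIntegrable_fiberNorm (g : Matrix (Fin n) (Fin n) ℝ) {p q : ℝ} (hpq : p < q)
    (h : C1On γ (Icc p q)) (hγ : ∀ t ∈ Icc p q, IsUnit (γ t).det) :
    IntervalIntegrable (fun t => fiberNorm g (γ t) (pathDeriv γ t)) volume p q := by
  set D : ℝ → Matrix (Fin n) (Fin n) ℝ :=
    fun t => of fun i j => derivWithin (fun x => γ x i j) (Icc p q) t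
  have hγc : ContinuousOn γ (Icc p q) :=
    continuousOn_pi.2 fun i => continuousOn_pi.2 fun j => (h i j).continuousOn
  have hDc : ContinuousOn D (Icc p q) := continuousOn_pi.2 fun i => continuousOn_pi.2 fun j =>
    (h i j).continuousOn_derivWithin (uniqueDiffOn_Icc hpq) le_rfl
  have hc : ContinuousOn (fun t => fiberNorm g (γ t) (D t)) (Icc p q) := fun t ht =>
    (continuousAt_fiberNorm g (hγ t ht) (D t)).comp_continuousWithinAt
      (f := fun t => (γ t, D t)) ((hγc t ht).prodMk (hDc t ht))
  rw [intervalIntegrable_iff_integrableOn_Ioo_of_le hpq.le]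
  refine (hc.integrableOn_Icc.mono_set Ioo_subset_Icc_self).congr_fun (fun t ht => ?_)
    measurableSet_Ioo
  have hD : D t = pathDeriv γ t := Matrix.ext fun i j =>
    derivWithin_of_mem_nhds (Icc_mem_nhds ht.1 ht.2)
  simp only [hD]

lemma PiecewiseC1On.intervalIntegrable_fiberNorm (g : Matrix (Fin n) (Fin n) ℝ) {t₀ t₁ : ℝ}
    (h : PiecewiseC1On γ t₀ t₁) (hγ : ∀ t ∈ Icc t₀ t₁, IsUnit (γ t).det) :
    IntervalIntegrable (fun t => fiberNorm g (γ t) (pathDeriv γ t)) volume t₀ t₁ := by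
  obtain ⟨-, k, s, hs, rfl, rfl, hC⟩ := h
  suffices ∀ i : Fin (k + 1), IntervalIntegrable
      (fun t => fiberNorm g (γ t) (pathDeriv γ t)) volume (s 0) (s i) from this _
  intro i
  induction i using Fin.induction with
  | zero => exact .refl
  | succ i ih =>
    exact ih.trans <| (hC i).intervalIntegrable_fiberNorm g (hs i.castSucc_lt_succ) fun t ht =>
      hγ t ⟨(hs.monotone (Fin.zero_le _)).trans ht.1, ht.2.trans (hs.monotone (Fin.le_last _))⟩

end PiecewiseC1

section FiniteLengthPath

variable {n : ℕ} {g : Matrix (Fin n) (Fin n) ℝ} {γ : ℝ → Matrix (Fin n) (Fin n) ℝ}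

lemma continuousAt_of_forall_piecewiseC1On (hpw : ∀ s : ℝ, 0 < s → s < 1 → PiecewiseC1On γ 0 s)
    {t : ℝ} (ht : t ∈ Ioo 0 1) : ContinuousAt γ t := by
  obtain ⟨s, hts, hs⟩ := exists_between ht.2
  exact (hpw s (ht.1.trans hts) hs).1.continuousAt (Icc_mem_nhds ht.1 hts)

lemma pathDeriv_transpose {t : ℝ} (h : ∀ᶠ x in 𝓝 t, (γ x)ᵀ = γ x) :
    (pathDeriv γ t)ᵀ = pathDeriv γ t :=
  Matrix.ext fun i j =>
    (show (fun x => γ x j i) =ᶠ[𝓝 t] fun x => γ x i j from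
      h.mono fun _ hx => congrFun (congrFun hx i) j).deriv_eq

variable (hmem : ∀ t ∈ Ico (0 : ℝ) 1, (γ t).PosDef)
include hmem

lemma pathDeriv_transpose_of_mem_Ioo {t : ℝ} (ht : t ∈ Ioo 0 1) :
    (pathDeriv γ t)ᵀ = pathDeriv γ t :=
  pathDeriv_transpose <| Filter.mem_of_superset (Ioo_mem_nhds ht.1 ht.2) fun x hx =>
    (hmem x ⟨hx.1.le, hx.2⟩).transpose_eq

variable (hpw : ∀ s : ℝ, 0 < s → s < 1 → PiecewiseC1On γ 0 s)
include hpw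

lemma intervalIntegrable_fiberNorm {u v : ℝ} (hu : 0 ≤ u) (huv : u ≤ v) (hv : v < 1) :
    IntervalIntegrable (fun t => fiberNorm g (γ t) (pathDeriv γ t)) volume u v := by
  obtain rfl | hv0 := (hu.trans huv).eq_or_lt
  · rw [le_antisymm huv hu]
  refine ((hpw v hv0 hv).intervalIntegrable_fiberNorm g fun t ht =>
    (hmem t ⟨ht.1, ht.2.trans_lt hv⟩).det_pos.ne'.isUnit).mono_set ?_
  rw [uIcc_of_le huv, uIcc_of_le hv0.le]
  exact Icc_subset_Icc_left hu

lemma pathLength_sub_pathLength {u v : ℝ} (hu : 0 ≤ u) (huv : u ≤ v) (hv : v < 1) :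
    pathLength g γ 0 v - pathLength g γ 0 u = ∫ t in u..v, fiberNorm g (γ t) (pathDeriv γ t) :=
  intervalIntegral.integral_interval_sub_left
    (intervalIntegrable_fiberNorm hmem hpw le_rfl (hu.trans huv) hv)
    (intervalIntegrable_fiberNorm hmem hpw le_rfl hu (huv.trans_lt hv))

lemma monotoneOn_pathLength (hg : g.PosDef) : MonotoneOn (pathLength g γ 0) (Ico 0 1) :=
  fun _ hu _ hv huv => sub_nonneg.1 <| pathLength_sub_pathLength hmem hpw hu.1 huv hv.2 ▸
    intervalIntegral.integral_nonneg huv fun t ht => mul_nonneg (Real.sqrt_nonneg _)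
      (qdet_pos hg (hmem t ⟨hu.1.trans ht.1, ht.2.trans_lt hv.2⟩)).le

lemma abs_sub_le_mul_pathLength_sub {F F' : ℝ → ℝ} {K u v : ℝ} (hu : 0 ≤ u) (huv : u ≤ v)
    (hv : v < 1) (hF : ContinuousOn F (Icc u v))
    (hF' : ∀ t ∈ Ioo u v, (∀ i j, HasDerivAt (fun x => γ x i j) (pathDeriv γ t i j) t) →
      HasDerivAt F (F' t) t)
    (hbound : ∀ t ∈ Ioo u v, |F' t| ≤ K * fiberNorm g (γ t) (pathDeriv γ t)) :
    |F v - F u| ≤ K * (pathLength g γ 0 v - pathLength g γ 0 u) := by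
  obtain rfl | huv := huv.eq_or_lt
  · simp
  obtain ⟨S, hS, hγ'⟩ := (hpw v (hu.trans_lt huv) hv).exists_finite_hasDerivAt
  rw [pathLength_sub_pathLength hmem hpw hu huv.le hv, ← intervalIntegral.integral_const_mul]
  exact abs_sub_le_integral_of_abs_deriv_le huv.le hS.countable hF
    (fun t ht => hF' t ht.1 (hγ' t ⟨⟨hu.trans_lt ht.1.1, ht.1.2⟩, ht.2⟩))
    (fun t ht => hbound t ht.1) ((intervalIntegrable_fiberNorm hmem hpw hu huv.le hv).const_mul K)

lemma exists_tendsto_of_abs_deriv_le (hg : g.PosDef) {C : ℝ}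
    (hC : ∀ s : ℝ, 0 ≤ s → s < 1 → pathLength g γ 0 s ≤ C) {F F' : ℝ → ℝ} {K t₀ : ℝ}
    (ht₀ : 0 ≤ t₀) (ht₀1 : t₀ < 1) (hF : ContinuousOn F (Ioo t₀ 1))
    (hF' : ∀ t ∈ Ioo t₀ 1, (∀ i j, HasDerivAt (fun x => γ x i j) (pathDeriv γ t i j) t) →
      HasDerivAt F (F' t) t)
    (hbound : ∀ t ∈ Ioo t₀ 1, |F' t| ≤ K * fiberNorm g (γ t) (pathDeriv γ t)) :
    ∃ c, Tendsto F (𝓝[<] 1) (𝓝 c) := by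
  have hmono := monotoneOn_pathLength hmem hpw hg
  have hlen := hmono.mono Ioo_subset_Ico_self |>.tendsto_nhdsWithin_Ioo_left
    ⟨1 / 2, by norm_num, by norm_num⟩ ⟨C, by rintro _ ⟨s, hs, rfl⟩; exact hC s hs.1.le hs.2⟩
  have key : ∀ u ∈ Ioo t₀ 1, ∀ v ∈ Ioo t₀ 1, u ≤ v →
      |F v - F u| ≤ K * |pathLength g γ 0 v - pathLength g γ 0 u| := fun u hu v hv huv => by
    rw [abs_of_nonneg <| sub_nonneg.2 <|
      hmono ⟨ht₀.trans hu.1.le, hu.2⟩ ⟨ht₀.trans hv.1.le, hv.2⟩ huv]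
    exact abs_sub_le_mul_pathLength_sub hmem hpw (ht₀.trans hu.1.le) huv hv.2
      (hF.mono (Icc_subset_Ioo hu.1 hv.2)) (fun t ht => hF' t ⟨hu.1.trans ht.1, ht.2.trans hv.2⟩)
      (fun t ht => hbound t ⟨hu.1.trans ht.1, ht.2.trans hv.2⟩)
  refine exists_tendsto_of_dist_le_mul_dist hlen (K := K) ?_
  filter_upwards [prod_mem_prod (Ioo_mem_nhdsLT ht₀1) (Ioo_mem_nhdsLT ht₀1)] with ⟨u, v⟩ ⟨hu, hv⟩
  simp only [Real.dist_eq]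
  rcases le_total u v with h | h
  · rw [abs_sub_comm, abs_sub_comm (pathLength g γ 0 u)]
    exact key u hu v hv h
  · exact key v hv u hu h

lemma exists_pos_tendsto_qdet (hg : g.PosDef) {C : ℝ}
    (hC : ∀ s : ℝ, 0 ≤ s → s < 1 → pathLength g γ 0 s ≤ C)
    (hdet : ¬ Tendsto (fun t => (g⁻¹ * γ t).det) (𝓝[<] 1) (𝓝 0)) :
    ∃ δ > 0, Tendsto (fun t => qdet g (γ t)) (𝓝[<] 1) (𝓝 δ) := by
  obtain ⟨δ, hδ⟩ := exists_tendsto_of_abs_deriv_le hmem hpw hg hC (K := √n / 4)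
    (F' := fun t => qdet g (γ t) * trA (γ t) (pathDeriv γ t) / 4) le_rfl zero_lt_one
    (fun t ht => ((continuous_qdet g).continuousAt.comp
      (continuousAt_of_forall_piecewiseC1On hpw ht)).continuousWithinAt)
    (fun t ht => hasDerivAt_qdet hg (hmem t ⟨ht.1.le, ht.2⟩)) fun t ht => by
      have hq := (qdet_pos hg (hmem t ⟨ht.1.le, ht.2⟩)).le
      have htr := abs_trA_le (hmem t ⟨ht.1.le, ht.2⟩) (pathDeriv_transpose_of_mem_Ioo hmem ht)
      rw [abs_div, abs_mul, abs_of_nonneg hq, abs_of_pos (four_pos : (0 : ℝ) < 4), fiberNorm]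
      calc qdet g (γ t) * |trA (γ t) (pathDeriv γ t)| / 4
          ≤ qdet g (γ t) * (√n * √(trSq (γ t) (pathDeriv γ t))) / 4 := by gcongr
        _ = √n / 4 * (√(trSq (γ t) (pathDeriv γ t)) * qdet g (γ t)) := by ring
  have hpos : ∀ᶠ t in 𝓝[<] (1 : ℝ), 0 < qdet g (γ t) := by
    filter_upwards [Ioo_mem_nhdsLT one_pos] with t ht using qdet_pos hg (hmem t ⟨ht.1.le, ht.2⟩)
  refine ⟨δ, (ge_of_tendsto hδ (hpos.mono fun _ => le_of_lt)).lt_of_ne fun h0 => hdet ?_, hδ⟩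
  have h4 := hδ.pow 4
  rw [← h0, zero_pow four_ne_zero] at h4
  refine h4.congr' ?_
  filter_upwards [Ioo_mem_nhdsLT one_pos] with t ht
  exact qdet_pow_four (det_mul g⁻¹ _ ▸ mul_pos hg.inv.det_pos (hmem t ⟨ht.1.le, ht.2⟩).det_pos).le

lemma exists_pos_tendsto_dotProduct_mulVec (hg : g.PosDef) {C : ℝ}
    (hC : ∀ s : ℝ, 0 ≤ s → s < 1 → pathLength g γ 0 s ≤ C) {δ : ℝ} (hδ : 0 < δ)
    (hqdet : ∀ᶠ t in 𝓝[<] 1, δ < qdet g (γ t)) {w : Fin n → ℝ} (hw : w ≠ 0) :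
    ∃ c > 0, Tendsto (fun t => w ⬝ᵥ γ t *ᵥ w) (𝓝[<] 1) (𝓝 c) := by
  have hpos : ∀ t ∈ Ico (0 : ℝ) 1, 0 < w ⬝ᵥ γ t *ᵥ w := fun t ht => by
    simpa using (hmem t ht).dotProduct_mulVec_pos hw
  obtain ⟨t₀, ht₀1, ht₀⟩ := mem_nhdsLT_iff_exists_Ioo_subset.1 hqdet
  have hIoo : ∀ t ∈ Ioo (max t₀ 0) 1, t ∈ Ioo 0 1 ∧ δ < qdet g (γ t) := fun t ht =>
    ⟨⟨(le_max_right _ _).trans_lt ht.1, ht.2⟩, ht₀ ⟨(le_max_left _ _).trans_lt ht.1, ht.2⟩⟩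
  obtain ⟨c, hc⟩ := exists_tendsto_of_abs_deriv_le hmem hpw hg hC (K := δ⁻¹)
    (F := fun t => Real.log (w ⬝ᵥ γ t *ᵥ w))
    (F' := fun t => (w ⬝ᵥ pathDeriv γ t *ᵥ w) / (w ⬝ᵥ γ t *ᵥ w))
    (le_max_right t₀ 0) (max_lt ht₀1 one_pos)
    (fun t ht => (((continuous_dotProduct_mulVec w).continuousAt.comp
      (continuousAt_of_forall_piecewiseC1On hpw (hIoo t ht).1)).log
        (hpos t (Ioo_subset_Ico_self (hIoo t ht).1)).ne').continuousWithinAt)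
    (fun t ht hγ' => (hasDerivAt_dotProduct_mulVec w hγ').log
      (hpos t (Ioo_subset_Ico_self (hIoo t ht).1)).ne') fun t ht => by
      obtain ⟨ht01, hδt⟩ := hIoo t ht
      have hp := hpos t (Ioo_subset_Ico_self ht01)
      have hquad := abs_dotProduct_mulVec_le_sqrt_trSq (hmem t (Ioo_subset_Ico_self ht01))
        (pathDeriv_transpose_of_mem_Ioo hmem ht01) w
      have hσ : √(trSq (γ t) (pathDeriv γ t)) ≤ δ⁻¹ * fiberNorm g (γ t) (pathDeriv γ t) := by
        rw [le_inv_mul_iff₀ hδ, fiberNorm, mul_comm δ]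
        gcongr
      rw [abs_div, abs_of_pos hp, div_le_iff₀ hp]
      exact hquad.trans (by gcongr)
  refine ⟨Real.exp c, Real.exp_pos c, ((Real.continuous_exp.tendsto c).comp hc).congr' ?_⟩
  filter_upwards [Ioo_mem_nhdsLT one_pos] with t ht using Real.exp_log (hpos t ⟨ht.1.le, ht.2⟩)

end FiniteLengthPath

theorem stmt_5_general (n : ℕ) (g : Matrix (Fin n) (Fin n) ℝ) (hg : g ∈ Pn n)
    (γ : ℝ → Matrix (Fin n) (Fin n) ℝ)
    (hpw : ∀ s : ℝ, 0 < s → s < 1 → PiecewiseC1On γ 0 s)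
    (hmem : ∀ t ∈ Set.Ico (0 : ℝ) 1, γ t ∈ Pn n)
    (hlen : ∃ C : ℝ, ∀ s : ℝ, 0 ≤ s → s < 1 → pathLength g γ 0 s ≤ C)
    (hdet : ¬ Filter.Tendsto (fun t => (g⁻¹ * γ t).det)
      (nhdsWithin 1 (Set.Iio 1)) (nhds 0)) :
    ∃ a : Matrix (Fin n) (Fin n) ℝ, a ∈ Pn n ∧
      Filter.Tendsto γ (nhdsWithin 1 (Set.Iio 1)) (nhds a) := by
  obtain ⟨C, hC⟩ := hlen
  obtain ⟨δ, hδ, hqdet⟩ := exists_pos_tendsto_qdet hmem hpw hg hC hdet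
  refine exists_posDef_tendsto_of_tendsto_dotProduct_mulVec ?_ fun w hw =>
    exists_pos_tendsto_dotProduct_mulVec hmem hpw hg hC (half_pos hδ)
      (hqdet.eventually_const_lt (half_lt_self hδ)) hw
  filter_upwards [Ioo_mem_nhdsLT one_pos] with t ht using (hmem t ⟨ht.1.le, ht.2⟩).transpose_eq

/-- a finite-length path whose determinant does not converge to zero
converges to a limit in `P_n`. -/
theorem stmt_5 (n : ℕ) (hn : 1 ≤ n) (g : Matrix (Fin n) (Fin n) ℝ) (hg : g ∈ Pn n)
    (γ : ℝ → Matrix (Fin n) (Fin n) ℝ)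
    (hpw : ∀ s : ℝ, 0 < s → s < 1 → PiecewiseC1On γ 0 s)
    (hmem : ∀ t ∈ Set.Ico (0 : ℝ) 1, γ t ∈ Pn n)
    (hlen : ∃ C : ℝ, ∀ s : ℝ, 0 ≤ s → s < 1 → pathLength g γ 0 s ≤ C)
    (hdet : ¬ Filter.Tendsto (fun t => (g⁻¹ * γ t).det)
      (nhdsWithin 1 (Set.Iio 1)) (nhds 0)) :
    ∃ a : Matrix (Fin n) (Fin n) ℝ, a ∈ Pn n ∧
      Filter.Tendsto γ (nhdsWithin 1 (Set.Iio 1)) (nhds a) :=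
  stmt_5_general n g hg γ hpw hmem hlen hdet

end
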